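/- arXiv:2103.07840 — 5 statements merged into one kernel-verified Lean document; each statement's English description precedes it below -/
import Mathlib

section
/- Let $SP_s(x)$ be a generalized star with center $x$ of degree $s \ge 3$ (a tree whose only vertex of degree greater than 2 is $x$). Let $w$ be a vertex of $SP_s(x)$ with $d(x,w)=t$. If every vertex of $SP_s(x)$ is within distance $i$ of $w$, then $|SP_s(x)| \le 2i+1+(s-2)(i-t)$. -/
/-!
Deleting the centre `x` splits the generalized star into legs, one per neighbour of `x`. A vertex
`v` is determined by its leg (the second vertex of a geodesic from `x` to `v`) together with its
depth `d(x, v)`, because every vertex other than `x` has degree at most two. All depths are at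
most `i + t`, and a vertex of depth `d > i - t` lies on the leg of `w`: on different legs the
geodesic between `v` and `w` passes through `x` (the graph is acyclic), so `d(w, v) = t + d > i`.
Hence there are at most `1 + s (i - t) + 2t` vertices.
-/

open SimpleGraph

/-- A burning sequence of length `k` (0-indexed: `x 0, …, x (k-1)`):
the distance conditions and the covering condition. -/
def IsBurnSeq {V : Type*} (G : SimpleGraph V) (k : ℕ) (x : ℕ → V) : Prop :=
  (∀ i j : ℕ, i < j → j < k → (↑(j - i) : ℕ∞) ≤ G.edist (x i) (x j)) ∧
  (∀ v : V, ∃ i < k, G.edist (x i) v ≤ (↑(k - 1 - i) : ℕ∞))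

/-- The burning number of a graph: the least length of a burning sequence. -/
noncomputable def burningNumber {V : Type*} (G : SimpleGraph V) : ℕ :=
  sInf {k | ∃ x : ℕ → V, IsBurnSeq G k x}

namespace SimpleGraph.Walk

variable {V : Type*} {G : SimpleGraph V}

theorem eq_of_isPath_cons_of_length_eq {c a u v : V} (h : G.Adj c a) (p : G.Walk a u)
    (q : G.Walk a v) (hp : (cons h p).IsPath) (hq : (cons h q).IsPath)
    (hdeg : ∀ y ∈ p.support, (G.neighborSet y).encard ≤ 2) (hlen : p.length = q.length) :
    u = v := by
  induction p generalizing c with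
  | nil => exact eq_of_length_eq_zero hlen.symm
  | @cons a b u hab p' ih =>
    cases q with
    | nil => simp at hlen
    | @cons _ b' _ hab' q' =>
      obtain rfl : b = b' := by
        by_contra hbb'
        have hcb : c ≠ b := fun hcb => (cons_isPath_iff _ _).1 hp |>.2 (by simp [hcb])
        have hcb' : c ≠ b' := fun hcb => (cons_isPath_iff _ _).1 hq |>.2 (by simp [hcb])
        have hthree : ({c, b, b'} : Set V).encard = 3 :=
          Set.encard_eq_three.2 ⟨c, b, b', hcb, hcb', hbb', rfl⟩
        have hsub : ({c, b, b'} : Set V) ⊆ G.neighborSet a := by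
          rintro y (rfl | rfl | rfl)
          exacts [h.symm, hab, hab']
        have := (Set.encard_le_encard hsub).trans (hdeg a (start_mem_support _))
        rw [hthree] at this
        exact absurd this (by decide)
      exact ih hab q' hp.of_cons hq.of_cons (fun y hy => hdeg y (List.mem_cons_of_mem _ hy))
        (by simpa using hlen)

theorem eq_of_isPath_of_snd_eq_of_length_eq {x u v : V}
    (hdeg : ∀ y, y ≠ x → (G.neighborSet y).encard ≤ 2) (p : G.Walk x u) (q : G.Walk x v)
    (hp : p.IsPath) (hq : q.IsPath) (hsnd : p.snd = q.snd) (hlen : p.length = q.length) :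
    u = v := by
  cases p with
  | nil => exact eq_of_length_eq_zero hlen.symm
  | cons hxa p' =>
    cases q with
    | nil => simp at hlen
    | cons hxb q' =>
      simp only [snd_cons] at hsnd
      subst hsnd
      refine eq_of_isPath_cons_of_length_eq hxa p' q' hp hq (fun y hy => hdeg y ?_)
        (by simpa using hlen)
      rintro rfl
      exact ((cons_isPath_iff _ _).1 hp).2 hy

theorem dist_add_dist_le_length_of_mem_support {x u v : V} (r : G.Walk u v)
    (hx : x ∈ r.support) : G.dist u x + G.dist x v ≤ r.length := by
  classical
  calc G.dist u x + G.dist x v ≤ (r.takeUntil x hx).length + (r.dropUntil x hx).length :=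
        add_le_add (dist_le _) (dist_le _)
    _ = r.length := by rw [← length_append, take_spec]

theorem mem_support_of_snd_ne (hG : G.IsAcyclic) {x u v : V} {p : G.Walk x u}
    {q : G.Walk x v} (hp : p.IsPath) (hq : q.IsPath) (hsnd : p.snd ≠ q.snd)
    (r : G.Walk u v) : x ∈ r.support := by
  classical
  by_contra hx
  cases p with
  | nil => exact hx r.start_mem_support
  | cons hxa p' =>
    have hx' : x ∉ (p'.append r).bypass.support := fun hmem =>
      ((mem_support_append_iff _ _).1 (support_bypass_subset_support _ hmem)).elim
        ((cons_isPath_iff _ _).1 hp).2 hx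
    have hq_eq : q = (cons hxa (p'.append r)).bypass :=
      congrArg Subtype.val <| (hG.subsingleton_path x v).elim ⟨q, hq⟩
        ⟨(cons hxa (p'.append r)).bypass, bypass_isPath _⟩
    rw [hq_eq, bypass, dif_neg hx'] at hsnd
    simp at hsnd

end SimpleGraph.Walk

namespace SimpleGraph

variable {V : Type*} {G : SimpleGraph V}

theorem IsAcyclic.dist_add_dist_le_of_snd_ne (hG : G.IsAcyclic) {x u v : V}
    (huv : G.Reachable u v) {p : G.Walk x u} {q : G.Walk x v} (hp : p.IsPath) (hq : q.IsPath)
    (hsnd : p.snd ≠ q.snd) : G.dist x u + G.dist x v ≤ G.dist u v := by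
  obtain ⟨r, hr⟩ := huv.exists_walk_length_eq_dist
  rw [dist_comm, ← hr]
  exact r.dist_add_dist_le_length_of_mem_support (Walk.mem_support_of_snd_ne hG hp hq hsnd r)

variable {x : V} {P : ∀ v, G.Walk x v}

theorem snd_dist_injective (hP : ∀ v, (P v).length = G.dist x v)
    (hdeg : ∀ y, y ≠ x → (G.neighborSet y).encard ≤ 2) :
    Function.Injective fun v => ((P v).snd, G.dist x v) := by
  intro u v huv
  obtain ⟨hsnd, hdist⟩ := Prod.mk.inj huv
  exact Walk.eq_of_isPath_of_snd_eq_of_length_eq hdeg (P u) (P v)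
    ((P u).isPath_of_length_eq_dist (hP u)) ((P v).isPath_of_length_eq_dist (hP v)) hsnd
    (by rw [hP, hP, hdist])

theorem IsTree.snd_eq_snd_of_lt_dist (hG : G.IsTree) (hP : ∀ v, (P v).length = G.dist x v)
    {w : V} {i : ℕ} (hi : ∀ v, G.dist w v ≤ i) {v : V} (hv : i - G.dist x w < G.dist x v) :
    (P v).snd = (P w).snd := by
  by_contra hne
  have hsum := hG.isAcyclic.dist_add_dist_le_of_snd_ne (hG.connected v w)
    ((P v).isPath_of_length_eq_dist (hP v)) ((P w).isPath_of_length_eq_dist (hP w)) hne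
  have := hi v
  rw [dist_comm] at this
  omega

theorem IsTree.snd_dist_mem [DecidableEq V] [Fintype (G.neighborSet x)] (hG : G.IsTree)
    (hP : ∀ v, (P v).length = G.dist x v) {w : V} {i : ℕ} (hi : ∀ v, G.dist w v ≤ i) (v : V) :
    ((P v).snd, G.dist x v) ∈ insert (x, 0)
      (G.neighborFinset x ×ˢ Finset.Ioc 0 (i - G.dist x w) ∪
        {(P w).snd} ×ˢ Finset.Ioc (i - G.dist x w) (i + G.dist x w)) := by
  rcases Nat.eq_zero_or_pos (G.dist x v) with h0 | hpos
  · rw [← hP] at h0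
    obtain rfl := Walk.eq_of_length_eq_zero h0
    have hsnd : (P x).snd = x := (P x).getVert_of_length_le (h0 ▸ zero_le_one)
    simp [hsnd]
  rcases le_or_gt (G.dist x v) (i - G.dist x w) with hshallow | hdeep
  · have hadj : G.Adj x (P v).snd :=
      Walk.adj_snd (Walk.not_nil_iff_lt_length.2 (hP v ▸ hpos))
    simp [hadj, hpos, hshallow]
  · have hdepth : G.dist x v ≤ G.dist x w + G.dist w v := hG.connected.dist_triangle
    have := hi v
    refine Finset.mem_insert_of_mem (Finset.mem_union_right _ (Finset.mem_product.2 ⟨?_, ?_⟩))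
    · exact Finset.mem_singleton.2 (hG.snd_eq_snd_of_lt_dist hP hi hdeep)
    · exact Finset.mem_Ioc.2 ⟨hdeep, by omega⟩

end SimpleGraph

theorem Finset.card_insert_product_union_le {α : Type*} [DecidableEq α] (a : α × ℕ)
    (A : Finset α) (b : α) (k n : ℕ) :
    (insert a (A ×ˢ Finset.Ioc 0 k ∪ {b} ×ˢ Finset.Ioc k n)).card ≤ 1 + A.card * k + (n - k) := by
  calc _ ≤ (A ×ˢ Finset.Ioc 0 k).card + ({b} ×ˢ Finset.Ioc k n).card + 1 :=
        (card_insert_le _ _).trans (Nat.add_le_add_right (card_union_le _ _) 1)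
    _ = 1 + A.card * k + (n - k) := by
        rw [card_product, card_product, card_singleton, Nat.card_Ioc, Nat.card_Ioc, Nat.sub_zero]
        ring

theorem stmt_0_general {V : Type*} (G : SimpleGraph V) (x w : V) (s t i : ℕ)
    (htree : G.IsTree)
    (hdeg : (G.neighborSet x).ncard = s)
    (hother : ∀ v : V, v ≠ x → (G.neighborSet v).ncard ≤ 2)
    (ht : G.dist x w = t)
    (hheight : ∀ v : V, G.dist w v ≤ i) :
    Nat.card V ≤ 2 * i + 1 + (s - 2) * (i - t) := by
  classical
  cases finite_or_infinite V
  swap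
  · simp [Nat.card_eq_zero_of_infinite]
  have := Fintype.ofFinite V
  subst ht
  choose P hP using htree.connected.exists_walk_length_eq_dist x
  have hti : G.dist x w ≤ i := dist_comm (G := G) ▸ hheight x
  have hns : (G.neighborFinset x).card = s := by
    rw [neighborFinset_def, ← Set.ncard_eq_toFinset_card', hdeg]
  have hother' (y : V) (hy : y ≠ x) : (G.neighborSet y).encard ≤ 2 := by
    rw [← (Set.toFinite _).cast_ncard_eq]
    exact_mod_cast hother y hy
  calc Nat.card V = (Finset.univ : Finset V).card := by simp
    _ ≤ _ := Finset.card_le_card_of_injOn _ (fun v _ => htree.snd_dist_mem hP hheight v)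
        (snd_dist_injective hP hother').injOn
    _ ≤ 1 + s * (i - G.dist x w) + ((i + G.dist x w) - (i - G.dist x w)) :=
        hns ▸ Finset.card_insert_product_union_le _ _ _ _ _
    _ ≤ 2 * i + 1 + (s - 2) * (i - G.dist x w) := by
      have : s * (i - G.dist x w) ≤ (2 + (s - 2)) * (i - G.dist x w) :=
        Nat.mul_le_mul_right _ (by omega)
      rw [add_mul] at this
      omega

/-- If a generalized star `SP_s(x)` has every vertex within distance `i` of `w`,
and `d(x, w) = t`, then it has at most `2i + 1 + (s-2)(i-t)` vertices. -/
theorem stmt_0 {V : Type*} (G : SimpleGraph V) (x w : V) (s t i : ℕ)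
    (hs : 3 ≤ s) (htree : G.IsTree)
    (hdeg : (G.neighborSet x).ncard = s)
    (hother : ∀ v : V, v ≠ x → (G.neighborSet v).ncard ≤ 2)
    (ht : G.dist x w = t)
    (hheight : ∀ v : V, G.dist w v ≤ i) :
    Nat.card V ≤ 2 * i + 1 + (s - 2) * (i - t) :=
  stmt_0_general G x w s t i htree hdeg hother ht hheight
end

section
/- Let $SP_s(x)$ be a generalized star with center $x$ of degree $s \ge 3$, and let $w$ be a vertex such that every vertex of $SP_s(x)$ is within distance $i$ of $w$. If $|SP_s(x)| = si+1$, then $w = x$ and $SP_s(x) - x$ is a disjoint union of $s$ paths each of order $i$. -/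
open SimpleGraph

/-- `G` is a path graph of order `m`: a tree with all degrees at most `2`. -/
def IsPathGraph {V : Type*} (G : SimpleGraph V) (m : ℕ) : Prop :=
  G.IsTree ∧ Nat.card V = m ∧ ∀ v : V, (G.neighborSet v).ncard ≤ 2

/-!
Removing the centre `x` splits the tree into `deg x = s` branches. Since every other vertex has
degree at most `2`, each branch is a path leaving `x`, on which a vertex is determined by its
distance to `x`; so a branch whose vertices lie within distance `m` of `x` has at most `m`
vertices. If `w ≠ x` lies at distance `d` from `x`, its own branch has at most `i + d` vertices
and each of the other `s - 1` branches at most `i - d`, in total `s i - (s - 2) d < s i`. Hence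
`w = x`, every branch has at most `i` vertices, and the count `s i` forces exactly `i` in each.
-/

namespace SimpleGraph

section General

variable {W : Type*} {H : SimpleGraph W}

lemma sum_natCard_supp [Finite W] [Fintype H.ConnectedComponent] :
    ∑ c : H.ConnectedComponent, Nat.card c.supp = Nat.card W := by
  rw [← Nat.card_sigma]
  exact Nat.card_congr (Equiv.sigmaFiberEquiv H.connectedComponentMk)

lemma ncard_neighborSet_induce_le [Finite W] (s : Set W) (v : s) :
    ((H.induce s).neighborSet v).ncard ≤ (H.neighborSet v).ncard :=
  Set.ncard_le_ncard_of_injOn Subtype.val (fun _ h ↦ h) Subtype.val_injective.injOn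

lemma ConnectedComponent.isPathGraph_induce_supp [Finite W] (hH : H.IsAcyclic)
    (hdeg : ∀ v, (H.neighborSet v).ncard ≤ 2) (c : H.ConnectedComponent) :
    IsPathGraph (H.induce c.supp) (Nat.card c.supp) :=
  ⟨⟨c.connected_toSimpleGraph, hH.induce _⟩, rfl,
    fun v ↦ (ncard_neighborSet_induce_le _ v).trans (hdeg v)⟩

lemma Connected.exists_adj_dist_add_one (hH : H.Connected) {x v : W} (hv : v ≠ x) :
    ∃ z, H.Adj z v ∧ H.dist x z + 1 = H.dist x v := by
  obtain ⟨p, hp⟩ := hH.exists_walk_length_eq_dist v x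
  obtain ⟨z, hvz, q, rfl⟩ := p.exists_eq_cons_of_ne hv
  have hzx : H.dist x z ≤ q.length := dist_comm (G := H) ▸ dist_le q
  have hxv : H.dist x v ≤ H.dist x z + H.dist z v := hH.dist_triangle
  rw [dist_comm, Walk.length_cons] at hp
  rw [dist_eq_one_iff_adj.mpr hvz.symm] at hxv
  exact ⟨z, hvz.symm, by omega⟩

end General

section RemoveVertex

variable {V : Type*} {G : SimpleGraph V} {x : V}

lemma reachable_induce_compl_singleton_iff {u v : ({x}ᶜ : Set V)} :
    (G.induce {x}ᶜ).Reachable u v ↔ ∃ p : G.Walk u v, x ∉ p.support := by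
  constructor
  · rintro ⟨q⟩
    refine ⟨q.map (Embedding.induce _).toHom, fun hx ↦ ?_⟩
    obtain ⟨z, -, hz⟩ := List.mem_map.mp (Walk.support_map _ q ▸ hx)
    exact z.2 hz
  · rintro ⟨p, hp⟩
    exact (p.induce _ fun z hz (hzx : z = x) ↦ hp (hzx ▸ hz)).reachable

lemma Connected.exists_adj_reachable_induce_compl_singleton (hG : G.Connected)
    (v : ({x}ᶜ : Set V)) :
    ∃ (y : V) (hy : G.Adj x y), (G.induce {x}ᶜ).Reachable ⟨y, hy.ne'⟩ v := by
  classical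
  obtain ⟨p, hp⟩ : ∃ p : G.Walk x v, p.IsPath := ⟨_, (hG x v).some.bypass_isPath⟩
  obtain ⟨y, hxy, q, rfl⟩ := p.exists_eq_cons_of_ne (Ne.symm v.2)
  exact ⟨y, hxy,
    reachable_induce_compl_singleton_iff.mpr ⟨q, ((Walk.cons_isPath_iff _ _).mp hp).2⟩⟩

/-- A walk from `u` to `v` avoiding `x`, followed by the edge `v x`, would show that the edge
`x u` is not a bridge. -/
lemma IsAcyclic.eq_of_reachable_induce_compl_singleton (hG : G.IsAcyclic)
    {u v : ({x}ᶜ : Set V)} (hu : G.Adj x u) (hv : G.Adj x v)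
    (huv : (G.induce {x}ᶜ).Reachable u v) : u = v := by
  obtain ⟨p, hp⟩ := reachable_induce_compl_singleton_iff.mp huv
  have hbridge := isBridge_iff_forall_walk_mem_edges.mp
    (isAcyclic_iff_forall_adj_isBridge.mp hG hu) (p.reverse.cons hv)
  rcases List.mem_cons.mp (Walk.edges_cons _ _ ▸ hbridge) with he | he
  · exact Subtype.ext (Sym2.congr_right.mp he)
  · refine absurd (p.reverse.fst_mem_support_of_mem_edges he) ?_
    simpa using hp

lemma Connected.dist_add_dist_le_of_not_reachable_induce (hG : G.Connected)
    {u v : ({x}ᶜ : Set V)} (huv : ¬ (G.induce {x}ᶜ).Reachable u v) :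
    G.dist u x + G.dist x v ≤ G.dist u v := by
  classical
  obtain ⟨p, hp⟩ := hG.exists_walk_length_eq_dist u v
  have hx : x ∈ p.support := by
    by_contra hx
    exact huv (reachable_induce_compl_singleton_iff.mpr ⟨p, hx⟩)
  calc G.dist u x + G.dist x v ≤ (p.takeUntil x hx).length + (p.dropUntil x hx).length :=
        add_le_add (dist_le _) (dist_le _)
    _ = G.dist u v := by rw [← Walk.length_append, p.take_spec hx, hp]

theorem IsTree.natCard_connectedComponent_induce_compl_singleton (hG : G.IsTree) (x : V) :
    Nat.card (G.induce {x}ᶜ).ConnectedComponent = (G.neighborSet x).ncard := by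
  let f : G.neighborSet x → (G.induce {x}ᶜ).ConnectedComponent :=
    fun y ↦ (G.induce {x}ᶜ).connectedComponentMk ⟨y, y.2.ne'⟩
  have hf : Function.Bijective f := by
    refine ⟨fun y z hyz ↦ Subtype.ext ?_, fun c ↦ ?_⟩
    · have := hG.isAcyclic.eq_of_reachable_induce_compl_singleton
        (u := ⟨y, y.2.ne'⟩) (v := ⟨z, z.2.ne'⟩) y.2 z.2 (ConnectedComponent.exact hyz)
      exact Subtype.mk.inj this
    · induction c using ConnectedComponent.ind with | h v => ?_
      obtain ⟨y, hy, hyv⟩ := hG.connected.exists_adj_reachable_induce_compl_singleton v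
      exact ⟨⟨y, hy⟩, ConnectedComponent.sound hyv⟩
  rw [← Nat.card_coe_set_eq, Nat.card_eq_of_bijective f hf]

/-- Induction on the distance: the parents of `u` and `v` coincide, and a common parent other
than `x` would have three neighbours. -/
theorem IsTree.eq_of_reachable_induce_of_dist_eq [Finite V] (hG : G.IsTree)
    (hdeg : ∀ v, v ≠ x → (G.neighborSet v).ncard ≤ 2) {u v : ({x}ᶜ : Set V)}
    (huv : (G.induce {x}ᶜ).Reachable u v) (hd : G.dist x u = G.dist x v) : u = v := by
  obtain ⟨d, hdu⟩ : ∃ d, G.dist x u = d := ⟨_, rfl⟩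
  induction d generalizing u v with
  | zero => exact absurd hdu (hG.connected.pos_dist_of_ne (Ne.symm u.2)).ne'
  | succ d ih =>
    obtain ⟨zu, hzu, hzud⟩ := hG.connected.exists_adj_dist_add_one u.2
    obtain ⟨zv, hzv, hzvd⟩ := hG.connected.exists_adj_dist_add_one v.2
    rcases Nat.eq_zero_or_pos d with rfl | hd0
    · exact hG.isAcyclic.eq_of_reachable_induce_compl_singleton
        (dist_eq_one_iff_adj.mp hdu) (dist_eq_one_iff_adj.mp (hd ▸ hdu)) huv
    have hzux : zu ≠ x := by rintro rfl; simp at hzud; omega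
    have hzvx : zv ≠ x := by rintro rfl; simp at hzvd; omega
    have hzuv : (G.induce {x}ᶜ).Reachable ⟨zu, hzux⟩ ⟨zv, hzvx⟩ :=
      (show (G.induce {x}ᶜ).Adj ⟨zu, hzux⟩ u from hzu).reachable.trans
        (huv.trans (show (G.induce {x}ᶜ).Adj ⟨zv, hzvx⟩ v from hzv).reachable.symm)
    obtain rfl : zu = zv :=
      congrArg Subtype.val (ih hzuv (by dsimp only; omega) (by dsimp only; omega))
    by_contra hne
    obtain ⟨t, ht, htd⟩ := hG.connected.exists_adj_dist_add_one hzux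
    have hthree : 2 < (G.neighborSet zu).ncard := (Set.two_lt_ncard (Set.toFinite _)).mpr
      ⟨u, hzu, v, hzv, t, ht.symm, fun h ↦ hne (Subtype.ext h),
        by rintro rfl; omega, by rintro rfl; omega⟩
    exact (hdeg zu hzux).not_gt hthree

theorem IsTree.natCard_supp_le [Finite V] (hG : G.IsTree)
    (hdeg : ∀ v, v ≠ x → (G.neighborSet v).ncard ≤ 2)
    (c : (G.induce {x}ᶜ).ConnectedComponent) {m : ℕ}
    (hm : ∀ v ∈ c.supp, G.dist x v ≤ m) : Nat.card c.supp ≤ m := by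
  rw [Nat.card_coe_set_eq]
  calc c.supp.ncard ≤ (Set.Icc 1 m).ncard :=
        Set.ncard_le_ncard_of_injOn (fun v ↦ G.dist x v)
          (fun v hv ↦ ⟨hG.connected.pos_dist_of_ne (Ne.symm v.2), hm v hv⟩)
          (fun u hu v hv huv ↦ hG.eq_of_reachable_induce_of_dist_eq hdeg
            (ConnectedComponent.exact (hu.trans hv.symm)) huv)
    _ = m := by simp

theorem IsTree.sum_natCard_supp_le_of_ne [Finite V]
    [Fintype (G.induce {x}ᶜ).ConnectedComponent] (hG : G.IsTree)
    (hdeg : ∀ v, v ≠ x → (G.neighborSet v).ncard ≤ 2) {w : V} {i : ℕ} (hw : w ≠ x)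
    (hheight : ∀ v, G.dist w v ≤ i) :
    ∑ c : (G.induce {x}ᶜ).ConnectedComponent, Nat.card c.supp ≤
      i + G.dist x w +
        (Nat.card (G.induce {x}ᶜ).ConnectedComponent - 1) * (i - G.dist x w) := by
  classical
  set cw := (G.induce {x}ᶜ).connectedComponentMk ⟨w, hw⟩
  have hcw : Nat.card cw.supp ≤ i + G.dist x w := hG.natCard_supp_le hdeg cw fun v _ ↦ by
    have := hG.connected.dist_triangle (u := x) (v := w) (w := v)
    have := hheight v
    omega
  have hrest : ∀ c ∈ Finset.univ.erase cw, Nat.card c.supp ≤ i - G.dist x w :=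
    fun c hc ↦ hG.natCard_supp_le hdeg c fun v hv ↦ by
      have hvw : ¬ (G.induce {x}ᶜ).Reachable v ⟨w, hw⟩ := fun h ↦
        Finset.ne_of_mem_erase hc (hv.symm.trans (ConnectedComponent.sound h))
      have hsplit := hG.connected.dist_add_dist_le_of_not_reachable_induce hvw
      dsimp only at hsplit
      rw [dist_comm (u := v.1) (v := x), dist_comm (u := v.1) (v := w)] at hsplit
      have := hheight v
      omega
  calc ∑ c : (G.induce {x}ᶜ).ConnectedComponent, Nat.card c.supp
      = Nat.card cw.supp + ∑ c ∈ Finset.univ.erase cw, Nat.card c.supp :=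
        (Finset.add_sum_erase _ _ (Finset.mem_univ cw)).symm
    _ ≤ i + G.dist x w + (Finset.univ.erase cw).card • (i - G.dist x w) :=
        add_le_add hcw (Finset.sum_le_card_nsmul _ _ _ hrest)
    _ = _ := by
        rw [Finset.card_erase_of_mem (Finset.mem_univ cw), Finset.card_univ,
          ← Nat.card_eq_fintype_card, smul_eq_mul]

theorem IsTree.eq_of_forall_dist_le [Finite V] [Fintype (G.induce {x}ᶜ).ConnectedComponent]
    (hG : G.IsTree) (hdeg : ∀ v, v ≠ x → (G.neighborSet v).ncard ≤ 2) {w : V} {s i : ℕ}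
    (hs : 3 ≤ s) (hcomp : Nat.card (G.induce {x}ᶜ).ConnectedComponent = s)
    (hheight : ∀ v, G.dist w v ≤ i)
    (hsum : ∑ c : (G.induce {x}ᶜ).ConnectedComponent, Nat.card c.supp = s * i) : w = x := by
  by_contra hw
  have hle := hG.sum_natCard_supp_le_of_ne hdeg hw hheight
  have hd : 0 < G.dist x w := hG.connected.pos_dist_of_ne (Ne.symm hw)
  have hdi : G.dist x w ≤ i := dist_comm (G := G) ▸ hheight x
  rw [hsum, hcomp] at hle
  obtain ⟨e, rfl⟩ : ∃ e, i = G.dist x w + e := ⟨i - G.dist x w, by omega⟩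
  obtain ⟨t, rfl⟩ : ∃ t, s = t + 3 := ⟨s - 3, by omega⟩
  rw [Nat.add_sub_cancel_left, show t + 3 - 1 = t + 2 by omega] at hle
  nlinarith

theorem IsTree.natCard_supp_eq [Finite V] [Fintype (G.induce {x}ᶜ).ConnectedComponent]
    (hG : G.IsTree) (hdeg : ∀ v, v ≠ x → (G.neighborSet v).ncard ≤ 2) {i : ℕ}
    (hheight : ∀ v, G.dist x v ≤ i)
    (hsum : ∑ c : (G.induce {x}ᶜ).ConnectedComponent, Nat.card c.supp =
      Nat.card (G.induce {x}ᶜ).ConnectedComponent * i)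
    (c : (G.induce {x}ᶜ).ConnectedComponent) : Nat.card c.supp = i := by
  refine (Finset.sum_eq_sum_iff_of_le (g := fun _ ↦ i)
    fun c _ ↦ hG.natCard_supp_le hdeg c fun v _ ↦ hheight v).mp ?_ c (Finset.mem_univ c)
  rw [hsum, Finset.sum_const, Finset.card_univ, Nat.card_eq_fintype_card, smul_eq_mul]

end RemoveVertex

end SimpleGraph

/-- If a generalized star `SP_s(x)` of height at most `i` from `w` has
`s·i + 1` vertices, then `w = x` and `SP_s(x) - x` is a disjoint union of
`s` paths of order `i`. -/
theorem stmt_1 {V : Type*} (G : SimpleGraph V) (x w : V) (s i : ℕ)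
    (hs : 3 ≤ s) (htree : G.IsTree)
    (hdeg : (G.neighborSet x).ncard = s)
    (hother : ∀ v : V, v ≠ x → (G.neighborSet v).ncard ≤ 2)
    (hheight : ∀ v : V, G.dist w v ≤ i)
    (hcard : Nat.card V = s * i + 1) :
    w = x ∧
      Nat.card (G.induce ({x}ᶜ : Set V)).ConnectedComponent = s ∧
      ∀ c : (G.induce ({x}ᶜ : Set V)).ConnectedComponent,
        IsPathGraph ((G.induce ({x}ᶜ : Set V)).induce c.supp) i := by
  have : Finite V := Nat.finite_of_card_ne_zero (by omega)
  have : Fintype (G.induce {x}ᶜ).ConnectedComponent := Fintype.ofFinite _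
  have hcomp : Nat.card (G.induce {x}ᶜ).ConnectedComponent = s :=
    (htree.natCard_connectedComponent_induce_compl_singleton x).trans hdeg
  have hsum : ∑ c : (G.induce {x}ᶜ).ConnectedComponent, Nat.card c.supp = s * i := by
    rw [sum_natCard_supp, Nat.card_coe_set_eq, Set.ncard_compl, Set.ncard_singleton, hcard,
      Nat.add_sub_cancel]
  have hwx : w = x := htree.eq_of_forall_dist_le hother hs hcomp hheight hsum
  have hdeg' : ∀ v, ((G.induce {x}ᶜ).neighborSet v).ncard ≤ 2 :=
    fun v ↦ (ncard_neighborSet_induce_le _ v).trans (hother v v.2)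
  refine ⟨hwx, hcomp, fun c ↦ ?_⟩
  have hci := htree.natCard_supp_eq hother (hwx ▸ hheight) (hcomp ▸ hsum) c
  exact hci ▸ c.isPathGraph_induce_supp (htree.isAcyclic.induce _) hdeg'
end

section
/- For any isometric subtree $H$ of a graph $G$ (a subtree such that $d_H(u,v) = d_G(u,v)$ for all vertices $u,v$ of $H$), we have $b(H) \le b(G)$. -/
open SimpleGraph

/-!
Take a burning sequence `x 0, …, x (k - 1)` of `G`. Since `H` is isometric, the ball of radius
`r` about `x i` meets `H` in a set of `H`-diameter at most `2 r`, and in a tree such a set lies in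
an `H`-ball of radius `r` (centred at the midpoint of a diametral pair). These centres cover `H`
by balls of radii `k - 1, …, 0`, and a greedy argument turns any such cover into a burning
sequence of length at most `k`.
-/

namespace SimpleGraph

variable {V : Type*} {G : SimpleGraph V}

lemma Walk.dist_add_dist_le_length {u v w : V} (p : G.Walk u v) (hw : w ∈ p.support) :
    G.dist u w + G.dist w v ≤ p.length := by
  classical
  have hlen := congrArg Walk.length (p.take_spec hw)
  rw [Walk.length_append] at hlen
  rw [← hlen]
  exact add_le_add (dist_le _) (dist_le _)

lemma IsAcyclic.mem_support_of_mem_support_isPath (hG : G.IsAcyclic) {u v w : V}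
    {p : G.Walk u v} (hp : p.IsPath) (hw : w ∈ p.support) (q : G.Walk u v) : w ∈ q.support := by
  classical
  have hq : q.bypass = p :=
    congrArg Subtype.val ((hG.subsingleton_path u v).elim ⟨q.bypass, q.bypass_isPath⟩ ⟨p, hp⟩)
  exact q.support_bypass_subset_support (hq ▸ hw)

/-- In a tree, every walk from `u` to `v` through `w` passes through each vertex `c` of the
path from `u` to `v`, so `c` lies on a geodesic from `u` to `w` or from `w` to `v`. -/
lemma IsTree.dist_add_dist_le_or_of_mem_support (hG : G.IsTree) {u v c : V} {p : G.Walk u v}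
    (hp : p.IsPath) (hc : c ∈ p.support) (w : V) :
    G.dist u c + G.dist c w ≤ G.dist u w ∨ G.dist w c + G.dist c v ≤ G.dist w v := by
  obtain ⟨q, hq⟩ := hG.connected.exists_walk_length_eq_dist u w
  obtain ⟨q', hq'⟩ := hG.connected.exists_walk_length_eq_dist w v
  have hc' := hG.isAcyclic.mem_support_of_mem_support_isPath hp hc (q.append q')
  rcases (q.mem_support_append_iff q').mp hc' with hcq | hcq'
  · exact .inl (hq ▸ q.dist_add_dist_le_length hcq)
  · exact .inr (hq' ▸ q'.dist_add_dist_le_length hcq')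

theorem IsTree.exists_dist_le_of_forall_dist_le_two_mul (hG : G.IsTree) {A : Set V} {r : ℕ}
    (hA : ∀ u ∈ A, ∀ v ∈ A, G.dist u v ≤ 2 * r) : ∃ c, ∀ w ∈ A, G.dist c w ≤ r := by
  rcases A.eq_empty_or_nonempty with rfl | hne
  · obtain ⟨c⟩ := hG.connected.nonempty
    exact ⟨c, by simp⟩
  set D : Set ℕ := (fun p : V × V => G.dist p.1 p.2) '' (A ×ˢ A)
  have hbdd : BddAbove D := ⟨2 * r, by
    rintro _ ⟨⟨u, v⟩, ⟨hu, hv⟩, rfl⟩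
    exact hA u hu v hv⟩
  obtain ⟨⟨u, v⟩, ⟨hu, hv⟩, huv⟩ := Nat.sSup_mem ((hne.prod hne).image _) hbdd
  have hmax : ∀ a ∈ A, ∀ b ∈ A, G.dist a b ≤ G.dist u v := fun a ha b hb =>
    (le_csSup hbdd ⟨(a, b), ⟨ha, hb⟩, rfl⟩).trans_eq huv.symm
  obtain ⟨P, hP, hPlen⟩ := hG.connected.exists_path_of_dist u v
  obtain ⟨q, hq⟩ : ∃ q, q = (G.dist u v + 1) / 2 := ⟨_, rfl⟩
  obtain ⟨c, hcP, huc, hcv⟩ : ∃ c ∈ P.support, G.dist u c ≤ q ∧ G.dist c v ≤ G.dist u v - q :=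
    ⟨P.getVert q, P.getVert_mem_support q, (dist_le (P.take q)).trans (by simp),
      (dist_le (P.drop q)).trans (by simp [hPlen])⟩
  have huvc : G.dist u v ≤ G.dist u c + G.dist c v := hG.connected.dist_triangle
  have hr := hA u hu v hv
  refine ⟨c, fun w hw => ?_⟩
  have huw := hmax u hu w hw
  have hwv := hmax w hw v hv
  have hcw : G.dist c w = G.dist w c := dist_comm
  rcases hG.dist_add_dist_le_or_of_mem_support hP hcP w with h | h <;>
    omega

end SimpleGraph

section Burning

variable {V : Type*} (G : SimpleGraph V)

/-- `BurnedBy G x n t v`: when fires are lit at `x 0, …, x (n - 1)` in rounds `0, …, n - 1`,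
the vertex `v` is on fire after `t` rounds (fire `l` has spread to radius `t - 1 - l`). -/
def BurnedBy (x : ℕ → V) (n t : ℕ) (v : V) : Prop :=
  ∃ l < n, G.edist (x l) v ≤ ((t - 1 - l : ℕ) : ℕ∞)

def IsSpaced (n : ℕ) (x : ℕ → V) : Prop :=
  ∀ i j : ℕ, i < j → j < n → (↑(j - i) : ℕ∞) ≤ G.edist (x i) (x j)

variable {G}

lemma isSpaced_update_of_not_burnedBy {n : ℕ} {x : ℕ → V} (hx : IsSpaced G n x) {u : V}
    (hu : ¬ BurnedBy G x n n u) : IsSpaced G (n + 1) (Function.update x n u) := by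
  intro i j hij hj
  rw [Function.update_of_ne (by omega)]
  rcases Nat.lt_succ_iff_lt_or_eq.mp hj with hjn | rfl
  · rw [Function.update_of_ne (by omega)]
    exact hx i j hij hjn
  · rw [Function.update_self]
    have hlt : ((j - 1 - i : ℕ) : ℕ∞) < G.edist (x i) u := not_le.mp fun h => hu ⟨i, hij, h⟩
    have hji : j - i = j - 1 - i + 1 := by omega
    rw [hji, Nat.cast_add, Nat.cast_one]
    exact Order.add_one_le_of_lt hlt

lemma BurnedBy.update {x : ℕ → V} {n t : ℕ} {v : V} (h : BurnedBy G x n t v) (u : V) :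
    BurnedBy G (Function.update x n u) (n + 1) t v := by
  obtain ⟨l, hl, hv⟩ := h
  exact ⟨l, by omega, by rwa [Function.update_of_ne (by omega)]⟩

lemma BurnedBy.of_burnedBy_self {x : ℕ → V} {n t : ℕ} {c v : V} (hc : BurnedBy G x n n c)
    (hv : G.edist c v ≤ ((t - 1 - n : ℕ) : ℕ∞)) (hnt : n < t) : BurnedBy G x n t v := by
  obtain ⟨l, hl, hcl⟩ := hc
  refine ⟨l, hl, ?_⟩
  calc G.edist (x l) v ≤ G.edist (x l) c + G.edist c v := SimpleGraph.edist_triangle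
    _ ≤ ((n - 1 - l : ℕ) : ℕ∞) + ((t - 1 - n : ℕ) : ℕ∞) := add_le_add hcl hv
    _ ≤ ((t - 1 - l : ℕ) : ℕ∞) := by rw [← Nat.cast_add, Nat.cast_le]; omega

/-- Greedy burning: in round `n` light `c n` if it is not yet burning, and otherwise any vertex
that is not yet burning; stop as soon as every vertex burns. -/
lemma exists_isBurnSeq_le_of_cover {k : ℕ} {c : ℕ → V} (hc : ∀ v, BurnedBy G c k k v) :
    ∃ m ≤ k, ∃ x, IsBurnSeq G m x := by
  suffices h : ∀ n ≤ k, (∃ m ≤ n, ∃ x, IsBurnSeq G m x) ∨ ∃ x, IsSpaced G n x ∧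
      ∀ i < n, ∀ v, G.edist (c i) v ≤ ((k - 1 - i : ℕ) : ℕ∞) → BurnedBy G x n k v by
    rcases h k le_rfl with h | ⟨x, hx, hcov⟩
    · exact h
    · refine ⟨k, le_rfl, x, hx, fun v => ?_⟩
      obtain ⟨i, hi, hv⟩ := hc v
      exact hcov i hi v hv
  intro n
  induction n with
  | zero => exact fun _ => .inr ⟨c, fun _ _ _ h => absurd h (Nat.not_lt_zero _),
      fun _ h => absurd h (Nat.not_lt_zero _)⟩
  | succ n ih =>
    intro hn
    rcases ih (by omega) with ⟨m, hm, h⟩ | ⟨x, hx, hcov⟩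
    · exact .inl ⟨m, by omega, h⟩
    by_cases hall : ∀ v, BurnedBy G x n n v
    · exact .inl ⟨n, by omega, x, hx, hall⟩
    obtain ⟨u, hu⟩ := not_forall.mp hall
    classical
    let y := if BurnedBy G x n n (c n) then u else c n
    have hy : ¬ BurnedBy G x n n y := by unfold y; split_ifs with h <;> assumption
    refine .inr ⟨Function.update x n y, isSpaced_update_of_not_burnedBy hx hy, fun i hi v hv => ?_⟩
    rcases Nat.lt_succ_iff_lt_or_eq.mp hi with hin | rfl
    · exact (hcov i hin v hv).update y
    by_cases hci : BurnedBy G x i i (c i)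
    · exact (hci.of_burnedBy_self hv (by omega)).update y
    · refine ⟨i, by omega, ?_⟩
      rwa [Function.update_self, show y = c i from if_neg hci]

lemma burningNumber_le_of_cover {k : ℕ} {c : ℕ → V} (hc : ∀ v, BurnedBy G c k k v) :
    burningNumber G ≤ k := by
  obtain ⟨m, hm, x, hx⟩ := exists_isBurnSeq_le_of_cover hc
  exact (Nat.sInf_le (s := {k | ∃ x : ℕ → V, IsBurnSeq G k x}) ⟨x, hx⟩).trans hm

variable (G) in
lemma exists_isBurnSeq_burningNumber [Fintype V] [Nonempty V] :
    ∃ x, IsBurnSeq G (burningNumber G) x := by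
  let e := Fintype.equivFin V
  let c : ℕ → V := fun i => if h : i < Fintype.card V then e.symm ⟨i, h⟩ else Classical.arbitrary V
  have hc : ∀ v, BurnedBy G c (Fintype.card V) (Fintype.card V) v := fun v =>
    ⟨e v, (e v).2, by simp [c]⟩
  obtain ⟨m, -, x, hx⟩ := exists_isBurnSeq_le_of_cover hc
  exact Nat.sInf_mem (s := {k | ∃ x : ℕ → V, IsBurnSeq G k x}) ⟨m, x, hx⟩

lemma exists_induce_edist_le_of_isometric {s : Set V} (htree : (G.induce s).IsTree)
    (hiso : ∀ u v : s, (G.induce s).edist u v = G.edist (u : V) (v : V)) (x : V) (r : ℕ) :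
    ∃ y : s, ∀ v : s, G.edist x v ≤ r → (G.induce s).edist y v ≤ r := by
  have hdist : ∀ u v : s, ((G.induce s).dist u v : ℕ∞) = G.edist (u : V) (v : V) := fun u v =>
    (htree.connected u v).coe_dist_eq_edist.trans (hiso u v)
  obtain ⟨y, hy⟩ := htree.exists_dist_le_of_forall_dist_le_two_mul
    (A := {v : s | G.edist x v ≤ r}) (r := r) fun u hu v hv => by
      have h : G.edist (u : V) v ≤ ((2 * r : ℕ) : ℕ∞) :=
        calc G.edist (u : V) v ≤ G.edist (u : V) x + G.edist x v := SimpleGraph.edist_triangle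
          _ ≤ r + r := add_le_add (SimpleGraph.edist_comm ▸ hu) hv
          _ = ((2 * r : ℕ) : ℕ∞) := by push_cast; ring
      exact_mod_cast (hdist u v).trans_le h
  refine ⟨y, fun v hv => ?_⟩
  rw [← (htree.connected y v).coe_dist_eq_edist]
  exact_mod_cast hy v hv

end Burning

/-- For any isometric subtree `H = G.induce s` of a graph `G`, `b(H) ≤ b(G)`. -/
theorem stmt_6 {V : Type*} [Fintype V] (G : SimpleGraph V) (s : Set V)
    (htree : (G.induce s).IsTree)
    (hiso : ∀ u v : s, (G.induce s).edist u v = G.edist (u : V) (v : V)) :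
    burningNumber (G.induce s) ≤ burningNumber G := by
  obtain ⟨⟨v₀, -⟩⟩ := htree.connected.nonempty
  have : Nonempty V := ⟨v₀⟩
  obtain ⟨x, -, hx⟩ := exists_isBurnSeq_burningNumber G
  choose y hy using fun i => exists_induce_edist_le_of_isometric htree hiso (x i)
    (burningNumber G - 1 - i)
  refine burningNumber_le_of_cover (c := y) fun v => ?_
  obtain ⟨i, hi, hv⟩ := hx v
  exact ⟨i, hi, hy i v hv⟩
end

section
/- Let $U_g^{n-g}$ be the unicyclic graph of order $n = q^2 + r$ obtained from a cycle of length $g$ by attaching a path of order $n-g$ at one vertex. If $q \le r \le 2q+1$, then $b(U_g^{n-g}) \ge q+1$. -/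
open SimpleGraph

/-- `G` is the unicyclic graph `U_g^{n-g}`: a cycle of length `g` with a pendant
path of order `n - g` attached at the vertex `x` (which has degree 3); all other
vertices have degree at most 2, the unique cycle has length `g`, and `G` has `n`
vertices and `n` edges. -/
def IsUOneArm {V : Type*} (G : SimpleGraph V) (x : V) (g n : ℕ) : Prop :=
  G.Connected ∧ Nat.card V = n ∧ Nat.card G.edgeSet = n ∧
  G.girth = (g : ℕ∞) ∧
  (G.neighborSet x).ncard = 3 ∧
  ∀ v : V, v ≠ x → (G.neighborSet v).ncard ≤ 2

section helpers
variable {V : Type*} {G : SimpleGraph V}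

lemma myWalk_dist_getVert_le (hconn : G.Connected) {u v : V} (p : G.Walk u v) :
    ∀ j, ∀ i ≤ j, j ≤ p.length → G.dist (p.getVert i) (p.getVert j) ≤ j - i := by
  intro j
  induction j with
  | zero => intro i hi _; interval_cases i; simp
  | succ j ih =>
    intro i hi hj
    rcases Nat.eq_or_lt_of_le hi with h | h
    · subst h; simp
    · have hij : i ≤ j := by omega
      have h1 : G.dist (p.getVert j) (p.getVert (j+1)) ≤ 1 := by
        have hadj : G.Adj (p.getVert j) (p.getVert (j+1)) :=
          p.adj_getVert_succ (by omega)
        exact le_of_eq (SimpleGraph.dist_eq_one_iff_adj.mpr hadj)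
      calc G.dist (p.getVert i) (p.getVert (j+1))
          ≤ G.dist (p.getVert i) (p.getVert j) + G.dist (p.getVert j) (p.getVert (j+1)) :=
            hconn.dist_triangle
        _ ≤ (j - i) + 1 := by
            exact Nat.add_le_add (ih i hij (by omega)) h1
        _ = (j + 1) - i := by omega

lemma myWalk_dist_getVert_eq (hconn : G.Connected) {u v : V} (p : G.Walk u v)
    (hp : p.length = G.dist u v) {j : ℕ} (hj : j ≤ p.length) :
    G.dist u (p.getVert j) = j := by
  have hle : G.dist u (p.getVert j) ≤ j := by
    have := myWalk_dist_getVert_le hconn p j 0 (Nat.zero_le _) hj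
    simpa using this
  have hge : j ≤ G.dist u (p.getVert j) := by
    have h2 : G.dist (p.getVert j) v ≤ p.length - j := by
      have := myWalk_dist_getVert_le hconn p p.length j hj le_rfl
      simpa [p.getVert_length] using this
    have h3 : G.dist u v ≤ G.dist u (p.getVert j) + G.dist (p.getVert j) v :=
      hconn.dist_triangle
    omega
  omega

lemma myExists_adj_pred (hconn : G.Connected) {v u' : V} {s : ℕ}
    (h : G.dist v u' = s + 1) :
    ∃ u, G.Adj u u' ∧ G.dist v u = s := by
  obtain ⟨p, hp⟩ := (hconn v u').exists_walk_length_eq_dist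
  have hlen : p.length = s + 1 := by rw [hp, h]
  refine ⟨p.getVert s, ?_, ?_⟩
  · have := p.adj_getVert_succ (i := s) (by omega)
    have hv : p.getVert (s+1) = u' := by
      rw [← hlen]; exact p.getVert_length
    rwa [hv] at this
  · exact myWalk_dist_getVert_eq hconn p hp (by omega)

end helpers

section balls
open scoped Classical
variable {V : Type*} [Fintype V] {G : SimpleGraph V}

noncomputable def mySphere (G : SimpleGraph V) (v : V) (s : ℕ) : Finset V :=
  Finset.univ.filter (fun u => G.dist v u = s)

noncomputable def myBall (G : SimpleGraph V) (v : V) (t : ℕ) : Finset V :=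
  Finset.univ.filter (fun u => G.dist v u ≤ t)

lemma mem_mySphere {v u : V} {s : ℕ} : u ∈ mySphere G v s ↔ G.dist v u = s := by
  simp [mySphere]

lemma mem_myBall {v u : V} {t : ℕ} : u ∈ myBall G v t ↔ G.dist v u ≤ t := by
  simp [myBall]

lemma mySphere_zero_card (hconn : G.Connected) (v : V) :
    (mySphere G v 0).card ≤ 1 := by
  have : mySphere G v 0 ⊆ {v} := by
    intro u hu
    rw [mem_mySphere] at hu
    have : u = v := ((hconn v u).dist_eq_zero_iff.mp hu).symm
    simp [this]
  simpa using Finset.card_le_card this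

lemma mySphere_one (hconn : G.Connected) (v : V) (x : V) :
    (mySphere G v 1).card ≤ (G.neighborSet v).ncard := by
  have hsub : mySphere G v 1 ⊆ (G.neighborSet v).toFinset := by
    intro u hu
    rw [mem_mySphere] at hu
    have : G.Adj v u := SimpleGraph.dist_eq_one_iff_adj.mp hu
    simp [this]
  have := Finset.card_le_card hsub
  rwa [← Set.ncard_eq_toFinset_card'] at this

lemma mySphere_step (hconn : G.Connected) {x : V}
    (hx3 : (G.neighborSet x).ncard = 3)
    (hd : ∀ v : V, v ≠ x → (G.neighborSet v).ncard ≤ 2)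
    (v : V) (s : ℕ) (hs : 1 ≤ s) :
    (mySphere G v (s+1)).card ≤ (mySphere G v s).card
      + (if x ∈ mySphere G v s then 1 else 0) := by
  classical
  -- predecessor function
  have hpred : ∀ u' : V, G.dist v u' = s + 1 → ∃ u, G.Adj u u' ∧ G.dist v u = s :=
    fun u' h => myExists_adj_pred hconn h
  set pred : V → V := fun u' =>
    if h : G.dist v u' = s + 1 then (hpred u' h).choose else v with hpreddef
  have hpred_mem : ∀ u' ∈ mySphere G v (s+1), pred u' ∈ mySphere G v s := by
    intro u' hu'
    rw [mem_mySphere] at hu'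
    rw [mem_mySphere, hpreddef]
    simp only [hu', dif_pos]
    exact (hpred u' hu').choose_spec.2
  have hpred_adj : ∀ u' ∈ mySphere G v (s+1), G.Adj (pred u') u' := by
    intro u' hu'
    rw [mem_mySphere] at hu'
    rw [hpreddef]
    simp only [hu', dif_pos]
    exact (hpred u' hu').choose_spec.1
  rw [Finset.card_eq_sum_card_fiberwise hpred_mem]
  have hfiber : ∀ u ∈ mySphere G v s,
      ((mySphere G v (s+1)).filter (fun u' => pred u' = u)).card
        ≤ (if u = x then 2 else 1) := by
    intro u hu
    rw [mem_mySphere] at hu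
    -- u has a neighbor w at distance s - 1
    obtain ⟨w, hw_adj, hw_dist⟩ := myExists_adj_pred hconn
      (show G.dist v u = (s-1) + 1 by omega)
    have hsub : ((mySphere G v (s+1)).filter (fun u' => pred u' = u))
        ⊆ (G.neighborSet u).toFinset.erase w := by
      intro u' hu'
      rw [Finset.mem_filter] at hu'
      obtain ⟨hu'mem, hu'pred⟩ := hu'
      have hadj : G.Adj u u' := by
        have := hpred_adj u' hu'mem
        rwa [hu'pred] at this
      have hne : u' ≠ w := by
        intro h
        rw [mem_mySphere] at hu'mem
        rw [h] at hu'mem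
        omega
      rw [Finset.mem_erase]
      exact ⟨hne, by simp [hadj]⟩
    have hcard := Finset.card_le_card hsub
    have hwmem : w ∈ (G.neighborSet u).toFinset := by simp [hw_adj.symm]
    rw [Finset.card_erase_of_mem hwmem, ← Set.ncard_eq_toFinset_card'] at hcard
    by_cases hux : u = x
    · subst hux
      rw [hx3] at hcard
      simpa using le_trans hcard (by norm_num)
    · have := hd u hux
      rw [if_neg hux]
      omega
  calc ∑ u ∈ mySphere G v s,
        ((mySphere G v (s+1)).filter (fun u' => pred u' = u)).card
      ≤ ∑ u ∈ mySphere G v s, (if u = x then 2 else 1) := Finset.sum_le_sum hfiber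
    _ = (mySphere G v s).card + (if x ∈ mySphere G v s then 1 else 0) := by
        have : ∀ u : V, (if u = x then 2 else 1) = 1 + (if u = x then 1 else 0) := by
          intro u; by_cases h : u = x <;> simp [h]
        simp_rw [this]
        rw [Finset.sum_add_distrib]
        simp [Finset.sum_ite_eq' (mySphere G v s) x (fun _ => 1)]

lemma mySphere_bound (hconn : G.Connected) {x : V}
    (hx3 : (G.neighborSet x).ncard = 3)
    (hd : ∀ v : V, v ≠ x → (G.neighborSet v).ncard ≤ 2)
    (v : V) : ∀ s : ℕ, 1 ≤ s →
    (mySphere G v s).card ≤ 2 + (if G.dist v x < s then 1 else 0) := by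
  intro s
  induction s with
  | zero => omega
  | succ s ih =>
    intro _
    rcases Nat.eq_zero_or_pos s with hs0 | hs1
    · subst hs0
      by_cases hvx : v = x
      · subst hvx
        have := mySphere_one hconn v v
        rw [hx3] at this
        have hdx : G.dist v v = 0 := by simp
        simp [hdx]
        omega
      · have := mySphere_one hconn v x
        have h2 := hd v hvx
        have : (mySphere G v 1).card ≤ 2 := by omega
        calc (mySphere G v 1).card ≤ 2 := this
          _ ≤ _ := by split <;> omega
    · have hstep := mySphere_step hconn hx3 hd v s hs1
      have hih := ih hs1
      have hxmem : x ∈ mySphere G v s ↔ G.dist v x = s := mem_mySphere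
      rcases lt_trichotomy (G.dist v x) s with h | h | h
      · have : (if x ∈ mySphere G v s then 1 else 0) = 0 := by
          rw [if_neg]; rw [hxmem]; omega
        rw [if_pos (by omega)]
        rw [this] at hstep
        rw [if_pos h] at hih
        omega
      · have : (if x ∈ mySphere G v s then 1 else 0) = 1 := by
          rw [if_pos]; rwa [hxmem]
        rw [if_pos (by omega)]
        rw [this] at hstep
        rw [if_neg (by omega)] at hih
        omega
      · have : (if x ∈ mySphere G v s then 1 else 0) = 0 := by
          rw [if_neg]; rw [hxmem]; omega
        rw [if_neg (by omega)]
        rw [this] at hstep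
        rw [if_neg (by omega)] at hih
        omega

lemma myBall_card_le (hconn : G.Connected) {x : V}
    (hx3 : (G.neighborSet x).ncard = 3)
    (hd : ∀ v : V, v ≠ x → (G.neighborSet v).ncard ≤ 2)
    (v : V) (t : ℕ) :
    (myBall G v t).card ≤ 2 * t + 1 + (t - G.dist v x) := by
  induction t with
  | zero =>
    have : myBall G v 0 = mySphere G v 0 := by
      ext u; simp [mem_myBall, mem_mySphere]
    rw [this]
    have := mySphere_zero_card hconn v
    omega
  | succ t ih =>
    have hsub : myBall G v (t+1) ⊆ myBall G v t ∪ mySphere G v (t+1) := by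
      intro u hu
      rw [mem_myBall] at hu
      rw [Finset.mem_union, mem_myBall, mem_mySphere]
      omega
    have hcard := le_trans (Finset.card_le_card hsub) (Finset.card_union_le _ _)
    have hsph := mySphere_bound hconn hx3 hd v (t+1) (by omega)
    rcases le_or_gt (G.dist v x) t with h | h
    · rw [if_pos (by omega)] at hsph
      omega
    · rw [if_neg (by omega)] at hsph
      omega

lemma myBall_card_ge (hconn : G.Connected) (c : V) (m : ℕ)
    (hm : m + 1 ≤ Fintype.card V) :
    m + 1 ≤ (myBall G c m).card := by
  classical
  by_cases h : ∃ w : V, m ≤ G.dist c w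
  · obtain ⟨w, hw⟩ := h
    obtain ⟨p, hp⟩ := (hconn c w).exists_walk_length_eq_dist
    have hlen : m ≤ p.length := by omega
    have hinj : Set.InjOn p.getVert (Finset.range (m+1)) := by
      intro i hi j hj hij
      simp only [Finset.coe_range, Set.mem_Iio] at hi hj
      have h1 := myWalk_dist_getVert_eq hconn p hp (j := i) (by omega)
      have h2 := myWalk_dist_getVert_eq hconn p hp (j := j) (by omega)
      rw [hij] at h1
      omega
    have hsub : (Finset.range (m+1)).image p.getVert ⊆ myBall G c m := by
      intro u hu
      rw [Finset.mem_image] at hu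
      obtain ⟨i, hi, hiu⟩ := hu
      rw [Finset.mem_range] at hi
      rw [mem_myBall, ← hiu]
      rw [myWalk_dist_getVert_eq hconn p hp (by omega)]
      omega
    have := Finset.card_le_card hsub
    rwa [Finset.card_image_of_injOn hinj, Finset.card_range] at this
  · push_neg at h
    have : myBall G c m = Finset.univ := by
      ext u; simp [mem_myBall]
      exact le_of_lt (h u)
    rw [this, Finset.card_univ]
    exact hm

end balls

section main
variable {V : Type*} [Fintype V] {G : SimpleGraph V}

lemma sum_odd_eq_sq' (k : ℕ) : ∑ i ∈ Finset.range k, (2 * i + 1) = k ^ 2 := by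
  induction k with
  | zero => simp
  | succ k ih =>
    rw [Finset.sum_range_succ, ih]
    ring

lemma sum_odd_eq_sq (k : ℕ) : ∑ i ∈ Finset.range k, (2 * (k - 1 - i) + 1) = k ^ 2 := by
  rw [Finset.sum_range_reflect (fun i => 2 * i + 1) k]
  exact sum_odd_eq_sq' k

lemma main_count (hconn : G.Connected) {x : V}
    (hx3 : (G.neighborSet x).ncard = 3)
    (hd : ∀ v : V, v ≠ x → (G.neighborSet v).ncard ≤ 2)
    {k : ℕ} (hk1 : 1 ≤ k) (hkn : k ≤ Fintype.card V) (xs : ℕ → V)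
    (hcov : ∀ v : V, ∃ i < k, G.dist (xs i) v ≤ k - 1 - i) :
    Fintype.card V ≤ k ^ 2 + (k - 1) := by
  classical
  set t : ℕ → ℕ := fun i => k - 1 - i with ht
  set d : ℕ → ℕ := fun i => G.dist (xs i) x with hdd
  set e : ℕ → ℕ := fun i => t i - d i with he
  set B : ℕ → Finset V := fun i => myBall G (xs i) (t i) with hB
  obtain ⟨i0, hi0mem, hi0max⟩ :=
    Finset.exists_max_image (Finset.range k) e ⟨0, Finset.mem_range.mpr (by omega)⟩
  have hi0k : i0 < k := Finset.mem_range.mp hi0mem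
  -- covering
  have hcover : (Finset.univ : Finset V) ⊆
      B i0 ∪ ((Finset.range k).erase i0).biUnion (fun i => B i \ B i0) := by
    intro v _
    obtain ⟨i, hik, hiv⟩ := hcov v
    have hvBi : v ∈ B i := mem_myBall.mpr hiv
    by_cases hv0 : v ∈ B i0
    · exact Finset.mem_union_left _ hv0
    · have hii0 : i ≠ i0 := by rintro rfl; exact hv0 hvBi
      refine Finset.mem_union_right _ (Finset.mem_biUnion.mpr ⟨i, ?_, ?_⟩)
      · exact Finset.mem_erase.mpr ⟨hii0, Finset.mem_range.mpr hik⟩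
      · exact Finset.mem_sdiff.mpr ⟨hvBi, hv0⟩
  -- ball upper bounds
  have hBle : ∀ i, (B i).card ≤ 2 * t i + 1 + e i := by
    intro i
    have := myBall_card_le hconn hx3 hd (xs i) (t i)
    simpa [hB, he, hdd] using this
  -- bound for each i ≠ i0
  have hkey : ∀ i ∈ (Finset.range k).erase i0, (B i \ B i0).card ≤ 2 * t i + 1 := by
    intro i hi
    rw [Finset.mem_erase, Finset.mem_range] at hi
    by_cases hei : e i = 0
    · calc (B i \ B i0).card ≤ (B i).card := Finset.card_le_card (Finset.sdiff_subset)
        _ ≤ 2 * t i + 1 + e i := hBle i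
        _ = 2 * t i + 1 := by omega
    · -- e i ≥ 1 : overlap
      have hei1 : 1 ≤ e i := by omega
      have hdi : d i + e i = t i := by
        have : d i ≤ t i := by by_contra h; simp only [he] at hei; omega
        simp only [he]; omega
      have hei0 : e i ≤ e i0 := hi0max i (Finset.mem_range.mpr hi.2)
      have hdi0 : d i0 + e i0 = t i0 := by
        have h1 : 1 ≤ e i0 := le_trans hei1 hei0
        have : d i0 ≤ t i0 := by by_contra h; simp only [he] at h1; omega
        simp only [he]; omega
      have hsubx : myBall G x (e i) ⊆ B i ∩ B i0 := by
        intro u hu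
        rw [mem_myBall] at hu
        rw [Finset.mem_inter]
        have hq1 : G.dist (xs i) x = d i := rfl
        have hq2 : G.dist (xs i0) x = d i0 := rfl
        constructor
        · rw [hB]; rw [mem_myBall]
          calc G.dist (xs i) u ≤ G.dist (xs i) x + G.dist x u := hconn.dist_triangle
            _ ≤ d i + e i := by omega
            _ = t i := hdi
        · rw [hB]; rw [mem_myBall]
          calc G.dist (xs i0) u ≤ G.dist (xs i0) x + G.dist x u := hconn.dist_triangle
            _ ≤ d i0 + e i0 := by omega
            _ = t i0 := hdi0
      have hlow : e i + 1 ≤ (B i ∩ B i0).card := by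
        have h1 : e i + 1 ≤ Fintype.card V := by
          have : e i ≤ t i := by simp only [he]; omega
          have : t i ≤ k - 1 := by simp only [ht]; omega
          omega
        exact le_trans (myBall_card_ge hconn x (e i) h1) (Finset.card_le_card hsubx)
      have hsum := Finset.card_sdiff_add_card_inter (B i) (B i0)
      have := hBle i
      omega
  -- assemble
  have hcard : Fintype.card V ≤ (B i0).card
      + ∑ i ∈ (Finset.range k).erase i0, (B i \ B i0).card := by
    calc Fintype.card V = (Finset.univ : Finset V).card := (Finset.card_univ).symm
      _ ≤ (B i0 ∪ ((Finset.range k).erase i0).biUnion (fun i => B i \ B i0)).card :=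
          Finset.card_le_card hcover
      _ ≤ (B i0).card + (((Finset.range k).erase i0).biUnion (fun i => B i \ B i0)).card :=
          Finset.card_union_le _ _
      _ ≤ _ := by
          exact Nat.add_le_add_left (Finset.card_biUnion_le) _
  have hsum2 : ∑ i ∈ (Finset.range k).erase i0, (B i \ B i0).card
      ≤ ∑ i ∈ (Finset.range k).erase i0, (2 * t i + 1) := Finset.sum_le_sum hkey
  have hsum3 : (2 * t i0 + 1) + ∑ i ∈ (Finset.range k).erase i0, (2 * t i + 1)
      = ∑ i ∈ Finset.range k, (2 * t i + 1) := Finset.add_sum_erase _ (fun i => 2 * t i + 1) hi0mem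
  have hsq : ∑ i ∈ Finset.range k, (2 * t i + 1) = k ^ 2 := sum_odd_eq_sq k
  have hei0t : e i0 ≤ k - 1 := by
    have : e i0 ≤ t i0 := by simp only [he]; omega
    simp only [ht] at this ⊢
    omega
  have := hBle i0
  omega

end main

section final
variable {V : Type*} {G : SimpleGraph V}

lemma my_dist_le_of_edist_le {u v : V} {c : ℕ} (h : G.edist u v ≤ (c : ℕ∞)) :
    G.dist u v ≤ c := by
  have := ENat.toNat_le_toNat h (by simp)
  simpa [SimpleGraph.dist] using this

lemma my_edist_le_of_dist_le (hconn : G.Connected) {u v : V} {c : ℕ}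
    (h : G.dist u v ≤ c) : G.edist u v ≤ (c : ℕ∞) := by
  obtain ⟨p, hp⟩ := (hconn u v).exists_walk_length_eq_dist
  calc G.edist u v ≤ (p.length : ℕ∞) := SimpleGraph.edist_le p
    _ ≤ (c : ℕ∞) := by rw [hp]; exact_mod_cast h

lemma my_coe_dist_le_edist (hconn : G.Connected) (u v : V) :
    (G.dist u v : ℕ∞) ≤ G.edist u v := by
  obtain ⟨p, hp⟩ := (hconn u v).exists_walk_length_eq_edist
  rw [← hp]
  exact_mod_cast Nat.cast_le.mpr (SimpleGraph.dist_le p)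

lemma my_burnSet_nonempty [Fintype V] (hconn : G.Connected) (x : V) :
    ∃ k, ∃ xs : ℕ → V, IsBurnSeq G k xs := by
  classical
  obtain ⟨w, -, hmax⟩ := Finset.exists_max_image Finset.univ (G.dist x)
    ⟨x, Finset.mem_univ x⟩
  obtain ⟨p, hp⟩ := (hconn x w).exists_walk_length_eq_dist
  refine ⟨G.dist x w + 1, p.getVert, ?_, ?_⟩
  · intro i j hij hjk
    have hj : j ≤ p.length := by omega
    have h1 := myWalk_dist_getVert_eq hconn p hp (j := i) (by omega)
    have h2 := myWalk_dist_getVert_eq hconn p hp (j := j) hj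
    have h3 : G.dist x (p.getVert j) ≤ G.dist x (p.getVert i)
        + G.dist (p.getVert i) (p.getVert j) := hconn.dist_triangle
    have h4 : j - i ≤ G.dist (p.getVert i) (p.getVert j) := by omega
    calc ((j - i : ℕ) : ℕ∞) ≤ (G.dist (p.getVert i) (p.getVert j) : ℕ∞) :=
        Nat.cast_le.mpr h4
      _ ≤ G.edist (p.getVert i) (p.getVert j) := my_coe_dist_le_edist hconn _ _
  · intro v
    refine ⟨0, by omega, ?_⟩
    have h0 : p.getVert 0 = x := p.getVert_zero
    rw [h0]
    have : G.dist x v ≤ G.dist x w + 1 - 1 - 0 := by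
      have := hmax v (Finset.mem_univ v)
      omega
    exact my_edist_le_of_dist_le hconn this

end final

/-- For `U_g^{n-g}` of order `n = q² + r`: if `q ≤ r ≤ 2q + 1`, then
`b(U_g^{n-g}) ≥ q + 1`. -/
theorem stmt_10 {V : Type*} [Fintype V] (G : SimpleGraph V) (x : V) (g n q r : ℕ)
    (hnqr : n = q ^ 2 + r) (hr1 : q ≤ r) (hr2 : r ≤ 2 * q + 1)
    (hG : IsUOneArm G x g n) :
    q + 1 ≤ burningNumber G := by
  obtain ⟨hconn, hcardV, -, -, hx3, hd⟩ := hG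
  have hn : Fintype.card V = n := by
    rw [← Nat.card_eq_fintype_card]; exact hcardV
  apply le_csInf
  · obtain ⟨k, xs, hxs⟩ := my_burnSet_nonempty hconn x
    exact ⟨k, xs, hxs⟩
  · rintro k ⟨xs, hdist, hcov⟩
    by_contra hlt
    push_neg at hlt
    have hkq : k ≤ q := by omega
    -- k = 0 impossible: covering of x fails
    rcases Nat.eq_zero_or_pos k with hk0 | hk1
    · obtain ⟨i, hik, -⟩ := hcov x
      omega
    have hq1 : 1 ≤ q := le_trans hk1 hkq
    have hqn : q ≤ n := by
      have : q ≤ q ^ 2 := by nlinarith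
      omega
    have hkn : k ≤ Fintype.card V := by omega
    have hcov' : ∀ v : V, ∃ i < k, G.dist (xs i) v ≤ k - 1 - i := by
      intro v
      obtain ⟨i, hik, hiv⟩ := hcov v
      exact ⟨i, hik, my_dist_le_of_edist_le hiv⟩
    have hmain := main_count hconn hx3 hd hk1 hkn xs hcov'
    have hle : k ^ 2 + (k - 1) ≤ q ^ 2 + (q - 1) := by
      have : k ^ 2 ≤ q ^ 2 := Nat.pow_le_pow_left hkq 2
      omega
    have : n ≤ q ^ 2 + (q - 1) := by omega
    omega
end

section
/- Let $U_g^{n-g}$ be the unicyclic graph of order $n = q^2 + r$ ($1 \le r \le 2q+1$) obtained from a cycle of length $g$ by attaching a path of order $n-g$ at one vertex. If $g \ge q^2 + 1$, then $b(U_g^{n-g}) \ge q+1$. -/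
/-!
Let `C` be the vertex set of the unique cycle. Every cycle vertex other than `x` has degree
at most 2, so all its neighbours lie on the cycle; and since `∑ deg = 2 * #edges = 2n` the
cycle cannot be the whole graph, so `x` has a neighbour off the cycle and `x` is the only exit
of `C`. Shortest paths between cycle vertices therefore stay on the cycle, and a ball of
radius `t` around any vertex meets at most `2t + 1` cycle vertices. The fires of a burning
sequence of length `k` cover balls of radii `k - 1, …, 0`, hence at most `∑ (2i + 1) = k²`
cycle vertices; covering `g > q²` of them forces `k ≥ q + 1`.
-/

open SimpleGraph

open Finset

namespace SimpleGraph

variable {V : Type*} {G : SimpleGraph V} {u v : V}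

lemma dist_getVert_le (p : G.Walk u v) (i : ℕ) : G.dist u (p.getVert i) ≤ i :=
  (dist_le (p.take i)).trans (by simp [Walk.take_length])

lemma dist_getVert_le_length_sub (p : G.Walk u v) (i : ℕ) :
    G.dist (p.getVert i) v ≤ p.length - i :=
  (dist_le (p.drop i)).trans_eq (p.drop_length i)

lemma Walk.sub_le_dist_getVert (p : G.Walk u v) (hp : p.length = G.dist u v) {i j : ℕ}
    (hj : j ≤ p.length) : j - i ≤ G.dist (p.getVert i) (p.getVert j) := by
  have h₁ := (p.take i).reachable.dist_triangle_left (p.getVert j)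
  have h₂ := (p.drop j).reachable.dist_triangle_right u
  have := dist_getVert_le p i
  have := dist_getVert_le_length_sub p j
  omega

lemma Reachable.exists_adj_dist_eq (hr : G.Reachable v u) {t : ℕ} (h : G.dist v u = t + 1) :
    ∃ w, G.Adj w u ∧ G.dist v w = t := by
  obtain ⟨p, hp⟩ := hr.exists_walk_length_eq_dist
  have hnil : ¬p.Nil := by rw [← Walk.length_eq_zero_iff]; omega
  refine ⟨p.penultimate, p.adj_penultimate hnil, le_antisymm ?_ ?_⟩
  · exact (dist_le p.dropLast).trans (by rw [Walk.length_dropLast]; omega)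
  · have := (p.adj_penultimate hnil).reachable.dist_triangle_right v
    rw [dist_eq_one_iff_adj.mpr (p.adj_penultimate hnil)] at this
    omega

def ExitsOnlyAt (G : SimpleGraph V) (s : Set V) (x : V) : Prop :=
  ∀ ⦃c d⦄, c ∈ s → d ∉ s → G.Adj c d → c = x

namespace ExitsOnlyAt

variable {s : Set V} {x : V}

lemma mem_support (h : G.ExitsOnlyAt s x) (p : G.Walk u v) (hu : u ∉ s) (hv : v ∈ s) :
    x ∈ p.support := by
  obtain ⟨d, hd, hd₁, hd₂⟩ := p.reverse.exists_boundary_dart s hv hu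
  rw [← List.mem_reverse, ← Walk.support_reverse, ← h hd₁ hd₂ d.adj]
  exact p.reverse.dart_fst_mem_support_of_mem_darts hd

lemma dist_le (h : G.ExitsOnlyAt s x) (hr : G.Reachable u v) (hu : u ∉ s) (hv : v ∈ s) :
    G.dist x v ≤ G.dist u v := by
  classical
  obtain ⟨p, hp⟩ := hr.exists_walk_length_eq_dist
  have hx := h.mem_support p hu hv
  calc G.dist x v ≤ (p.dropUntil x hx).length := SimpleGraph.dist_le _
    _ ≤ p.length := p.length_dropUntil_le_length hx
    _ = G.dist u v := hp

lemma mem (h : G.ExitsOnlyAt s x) (hconn : G.Connected) (hs : s.Nonempty) : x ∈ s := by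
  by_contra hx
  obtain ⟨c, hc⟩ := hs
  obtain ⟨d, -, hd₁, hd₂⟩ := (hconn c x).some.exists_boundary_dart s hc hx
  exact hx (h hd₁ hd₂ d.adj ▸ hd₁)

lemma exists_adj_dist_eq (h : G.ExitsOnlyAt s x) (hconn : G.Connected) (hv : v ∈ s)
    (hu : u ∈ s) {t : ℕ} (hd : G.dist v u = t + 1) :
    ∃ w ∈ s, G.Adj w u ∧ G.dist v w = t := by
  obtain ⟨w, hwu, hw⟩ := (hconn v u).exists_adj_dist_eq hd
  refine ⟨w, ?_, hwu, hw⟩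
  by_contra hws
  obtain rfl := h hu hws hwu.symm
  have := h.dist_le (hconn w v) hws hv
  rw [dist_comm, hd, dist_comm, hw] at this
  omega

end ExitsOnlyAt

section Counting

variable [DecidableRel G.Adj] {C : Finset V}

lemma card_filter_dist_eq_succ_le_two (hdeg : ∀ c ∈ C, #{d ∈ C | G.Adj c d} ≤ 2)
    (hpred : ∀ u ∈ C, ∀ t, G.dist v u = t + 1 → ∃ w ∈ C, G.Adj w u ∧ G.dist v w = t)
    (hv : v ∈ C) : ∀ t, #{c ∈ C | G.dist v c = t + 1} ≤ 2
  | 0 => by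
    refine (card_le_card fun c hc => ?_).trans (hdeg v hv)
    rw [mem_filter] at hc ⊢
    exact ⟨hc.1, dist_eq_one_iff_adj.mp hc.2⟩
  | t + 1 => by
    classical
    refine (card_le_card_of_forall_subsingleton (fun u w => G.Adj w u) ?_ ?_).trans
      (card_filter_dist_eq_succ_le_two hdeg hpred hv t)
    · intro u hu
      rw [mem_filter] at hu
      obtain ⟨w, hw, hwu, hvw⟩ := hpred u hu.1 _ hu.2
      exact ⟨w, mem_filter.mpr ⟨hw, hvw⟩, hwu⟩
    · intro w hw u₁ ⟨hu₁, hwu₁⟩ u₂ ⟨hu₂, hwu₂⟩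
      rw [mem_filter] at hw hu₁ hu₂
      obtain ⟨w', hw', hw'w, hvw'⟩ := hpred w hw.1 _ hw.2
      by_contra hne
      have hsub : {u₁, u₂, w'} ⊆ {d ∈ C | G.Adj w d} := by
        simp only [insert_subset_iff, singleton_subset_iff, mem_filter]
        exact ⟨⟨hu₁.1, hwu₁⟩, ⟨hu₂.1, hwu₂⟩, hw', hw'w.symm⟩
      have hcard : #{u₁, u₂, w'} = 3 :=
        card_eq_three.mpr ⟨u₁, u₂, w', hne, by grind, by grind, rfl⟩
      have := (card_le_card hsub).trans (hdeg w hw.1)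
      omega

lemma card_filter_dist_le_of_mem (hconn : G.Connected)
    (hdeg : ∀ c ∈ C, #{d ∈ C | G.Adj c d} ≤ 2)
    (hpred : ∀ u ∈ C, ∀ t, G.dist v u = t + 1 → ∃ w ∈ C, G.Adj w u ∧ G.dist v w = t)
    (hv : v ∈ C) : ∀ t, #{c ∈ C | G.dist v c ≤ t} ≤ 2 * t + 1
  | 0 => by
    refine (card_le_card fun c hc => ?_).trans (card_singleton v).le
    rw [mem_filter, Nat.le_zero, hconn.dist_eq_zero_iff] at hc
    exact mem_singleton.mpr hc.2.symm
  | t + 1 => by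
    classical
    have hsub : {c ∈ C | G.dist v c ≤ t + 1} ⊆
        {c ∈ C | G.dist v c ≤ t} ∪ {c ∈ C | G.dist v c = t + 1} := by
      intro c hc
      simp only [mem_union, mem_filter] at hc ⊢
      rcases hc.2.lt_or_eq with hlt | heq
      · exact .inl ⟨hc.1, Nat.le_of_lt_succ hlt⟩
      · exact .inr ⟨hc.1, heq⟩
    have := card_filter_dist_le_of_mem hconn hdeg hpred hv t
    have := card_filter_dist_eq_succ_le_two hdeg hpred hv t
    have := (card_le_card hsub).trans (card_union_le _ _)
    omega

lemma ExitsOnlyAt.card_filter_dist_le {x : V} (h : G.ExitsOnlyAt C x) (hconn : G.Connected)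
    (hC : C.Nonempty) (hdeg : ∀ c ∈ C, #{d ∈ C | G.Adj c d} ≤ 2) (v : V) (t : ℕ) :
    #{c ∈ C | G.dist v c ≤ t} ≤ 2 * t + 1 := by
  have hball {v} (hv : v ∈ C) := card_filter_dist_le_of_mem hconn hdeg
    (fun _ hu _ hd => h.exists_adj_dist_eq hconn hv hu hd) hv t
  by_cases hv : v ∈ C
  · exact hball hv
  · refine (card_le_card fun c hc => ?_).trans (hball (h.mem hconn (coe_nonempty.mpr hC)))
    rw [mem_filter] at hc ⊢
    exact ⟨hc.1, (h.dist_le (hconn v c) hv hc.1).trans hc.2⟩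

end Counting

lemma ncard_neighborSet_eq_degree (v : V) [Fintype (G.neighborSet v)] :
    (G.neighborSet v).ncard = G.degree v := by
  rw [← Set.fintypeCard_eq_ncard, card_neighborSet_eq_degree]

lemma card_lt_card_edgeFinset_of_two_le_degree [Fintype V] [DecidableRel G.Adj] {x : V}
    (h : ∀ v, 2 ≤ G.degree v) (hx : 2 < G.degree x) : Fintype.card V < #G.edgeFinset := by
  have := sum_lt_sum (fun v _ => h v) ⟨x, mem_univ x, hx⟩
  rw [sum_const, card_univ, smul_eq_mul, sum_degrees_eq_twice_card_edges] at this
  omega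

lemma card_filter_adj_le_degree [Fintype V] [DecidableRel G.Adj] (C : Finset V) (c : V) :
    #{e ∈ C | G.Adj c e} ≤ G.degree c :=
  card_le_card fun _ he => (mem_neighborFinset _ _ _).mpr (mem_filter.mp he).2

lemma card_filter_adj_lt_degree [Fintype V] [DecidableRel G.Adj] {C : Finset V} {c d : V}
    (hd : d ∉ C) (hcd : G.Adj c d) : #{e ∈ C | G.Adj c e} < G.degree c := by
  refine card_lt_card ((ssubset_iff_of_subset fun _ he => ?_).mpr ⟨d, ?_, fun h => hd ?_⟩)
  · exact (mem_neighborFinset _ _ _).mpr (mem_filter.mp he).2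
  · exact (mem_neighborFinset _ _ _).mpr hcd
  · exact (mem_filter.mp h).1

section Cycle

variable [DecidableEq V] {p : G.Walk u u}

lemma Walk.IsCycle.card_support_toFinset (hp : p.IsCycle) : #p.support.toFinset = p.length := by
  have hu : u ∈ p.support.tail := p.end_mem_tail_support hp.not_nil
  rw [← p.cons_tail_support, List.toFinset_cons, insert_eq_of_mem (List.mem_toFinset.mpr hu),
    List.toFinset_card_of_nodup hp.support_nodup, List.length_tail, p.length_support]
  rfl

lemma Walk.IsCycle.two_le_card_filter_adj [DecidableRel G.Adj] (hp : p.IsCycle) {c : V}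
    (hc : c ∈ p.support) : 2 ≤ #{d ∈ p.support.toFinset | G.Adj c d} := by
  rw [← hp.ncard_neighborSet_toSubgraph_eq_two hc, ← Set.ncard_coe_finset]
  refine Set.ncard_le_ncard (fun d hd => ?_) (Finset.finite_toSet _)
  rw [Subgraph.mem_neighborSet] at hd
  simp only [coe_filter, List.mem_toFinset, Set.mem_ofPred_eq, ← Walk.mem_verts_toSubgraph]
  exact ⟨hd.snd_mem, hd.adj_sub⟩

end Cycle

end SimpleGraph

section

variable {V : Type*} {G : SimpleGraph V}

lemma IsUOneArm.exists_finset_card_filter_dist_le [Fintype V] {x : V} {g n : ℕ}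
    (hG : IsUOneArm G x g n) :
    ∃ C : Finset V, #C = g ∧ ∀ v t, #{c ∈ C | G.dist v c ≤ t} ≤ 2 * t + 1 := by
  classical
  obtain ⟨hconn, hV, hE, hgirth, hx, hdeg⟩ := hG
  simp only [ncard_neighborSet_eq_degree] at hx hdeg
  replace hgirth : G.girth = g := by exact_mod_cast hgirth
  obtain rfl | hg := eq_or_ne g 0
  · exact ⟨∅, rfl, by simp⟩
  have hcyc : ¬G.IsAcyclic := by rwa [← girth_eq_zero, hgirth]
  obtain ⟨a, p, hp, hlen⟩ := exists_girth_eq_length.mpr hcyc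
  set C := p.support.toFinset
  have hcard : #C = g := by rw [hp.card_support_toFinset, ← hlen, hgirth]
  have hCdeg (c) (hc : c ∈ C) : 2 ≤ #{d ∈ C | G.Adj c d} :=
    hp.two_le_card_filter_adj (List.mem_toFinset.mp hc)
  have hexit : G.ExitsOnlyAt C x := fun c d hc hd hcd => by
    by_contra hcx
    have := card_filter_adj_lt_degree hd hcd
    have := hdeg c hcx
    have := hCdeg c hc
    omega
  have hCne : C.Nonempty := ⟨a, List.mem_toFinset.mpr p.start_mem_support⟩
  obtain ⟨y, hy⟩ : ∃ y, y ∉ C := by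
    by_contra! hall
    have := card_lt_card_edgeFinset_of_two_le_degree
      (fun v => (hCdeg v (hall v)).trans (card_filter_adj_le_degree C v))
      (hx ▸ by omega : 2 < G.degree x)
    rw [edgeFinset_card, ← Nat.card_eq_fintype_card, ← Nat.card_eq_fintype_card, hV, hE] at this
    omega
  obtain ⟨e, -, he₁, he₂⟩ :=
    (hconn x y).some.exists_boundary_dart C (hexit.mem hconn hCne) hy
  have hdeg₂ (c) (hc : c ∈ C) : #{d ∈ C | G.Adj c d} ≤ 2 := by
    by_cases hcx : c = x
    · have := card_filter_adj_lt_degree he₂ (hexit he₁ he₂ e.adj ▸ e.adj)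
      rw [hcx]
      omega
    · exact (card_filter_adj_le_degree C c).trans (hdeg c hcx)
  exact ⟨C, hcard, hexit.card_filter_dist_le hconn hCne hdeg₂⟩

lemma sum_range_two_mul_add_one (k : ℕ) : ∑ i ∈ range k, (2 * i + 1) = k ^ 2 := by
  induction k with
  | zero => rfl
  | succ k ih => rw [sum_range_succ, ih]; ring

lemma exists_isBurnSeq [Finite V] (hconn : G.Connected) : ∃ k f, IsBurnSeq G k f := by
  have := hconn.nonempty
  let x := Classical.arbitrary V
  obtain ⟨w, hw⟩ := Finite.exists_max (G.dist x)
  obtain ⟨p, hp⟩ := (hconn x w).exists_walk_length_eq_dist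
  -- Burn along a geodesic from `x` to a farthest vertex; the first fire alone covers everything.
  refine ⟨p.length + 1, p.getVert, fun i j _ hj => ?_, fun v => ⟨0, by omega, ?_⟩⟩
  · rw [← (hconn _ _).coe_dist_eq_edist]
    exact_mod_cast p.sub_le_dist_getVert hp (by omega)
  · rw [p.getVert_zero, ← (hconn _ _).coe_dist_eq_edist]
    exact_mod_cast (hw v).trans_eq hp.symm

lemma exists_isBurnSeq_burningNumber_s12 [Finite V] (hconn : G.Connected) :
    ∃ f, IsBurnSeq G (burningNumber G) f :=
  Nat.sInf_mem (exists_isBurnSeq hconn)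

lemma IsBurnSeq.card_le_sq {k : ℕ} {f : ℕ → V} (hb : IsBurnSeq G k f) (hconn : G.Connected)
    {C : Finset V} (hC : ∀ v t, #{c ∈ C | G.dist v c ≤ t} ≤ 2 * t + 1) : #C ≤ k ^ 2 := by
  classical
  have hcover : C ⊆ (range k).biUnion fun i => {c ∈ C | G.dist (f i) c ≤ k - 1 - i} := by
    intro c hc
    obtain ⟨i, hik, hi⟩ := hb.2 c
    rw [← (hconn _ _).coe_dist_eq_edist, Nat.cast_le] at hi
    exact mem_biUnion.mpr ⟨i, mem_range.mpr hik, mem_filter.mpr ⟨hc, hi⟩⟩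
  calc #C ≤ ∑ i ∈ range k, #{c ∈ C | G.dist (f i) c ≤ k - 1 - i} :=
        (card_le_card hcover).trans card_biUnion_le
    _ ≤ ∑ i ∈ range k, (2 * (k - 1 - i) + 1) := sum_le_sum fun i _ => hC _ _
    _ = k ^ 2 := by rw [sum_range_reflect (fun i => 2 * i + 1), sum_range_two_mul_add_one]

end

theorem stmt_12_general {V : Type*} [Fintype V] (G : SimpleGraph V) (x : V) (g n q : ℕ)
    (hG : IsUOneArm G x g n) (hg : q ^ 2 + 1 ≤ g) :
    q + 1 ≤ burningNumber G := by
  obtain ⟨C, hC, hball⟩ := hG.exists_finset_card_filter_dist_le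
  obtain ⟨f, hf⟩ := exists_isBurnSeq_burningNumber_s12 hG.1
  have hCk := hf.card_le_sq hG.1 hball
  by_contra! hq
  have := Nat.pow_le_pow_left (Nat.le_of_lt_succ hq) 2
  omega

/-- For `U_g^{n-g}` of order `n = q² + r` with `1 ≤ r ≤ 2q + 1`: if `g ≥ q² + 1`,
then `b(U_g^{n-g}) ≥ q + 1`. -/
theorem stmt_12 {V : Type*} [Fintype V] (G : SimpleGraph V) (x : V) (g n q r : ℕ)
    (hnqr : n = q ^ 2 + r) (hr1 : 1 ≤ r) (hr2 : r ≤ 2 * q + 1)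
    (hG : IsUOneArm G x g n) (hg : q ^ 2 + 1 ≤ g) :
    q + 1 ≤ burningNumber G :=
  stmt_12_general G x g n q hG hg
end
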